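/- arXiv:2503.00300 — 3 statements merged into one kernel-verified Lean document; each statement's English description precedes it below -/
import Mathlib

section
/- Let B ∈ ℂ^{m×m} be the self-adjoint matrix with B_{j,j}=0 and B_{j,k}=exp(−γ‖x_j−x_k‖₁) for j≠k, where the points x_1,…,x_m ∈ ℝ^d satisfy ‖x_j−x_k‖₂ ≥ K for j≠k. If γ ≥ (1/K)log(m/η) then ‖B‖₂ ≤ η. -/
/-!
Every entry of `B` is at most `exp (-γ K)`: the diagonal vanishes, and off the diagonal the
`ℓ¹` distance dominates the Euclidean one. The spectral norm is at most the Frobenius norm, hence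
at most `m` times the largest entry, and the choice of `γ` is exactly `m exp (-γ K) ≤ η`.
-/

open scoped Matrix Matrix.Norms.L2Operator

theorem EuclideanSpace.norm_le_sum_abs {ι : Type*} [Fintype ι] (x : EuclideanSpace ℝ ι) :
    ‖x‖ ≤ ∑ i, |x i| := by
  rw [EuclideanSpace.norm_eq, Real.sqrt_le_left (Finset.sum_nonneg fun i _ => abs_nonneg _)]
  simpa only [Real.norm_eq_abs] using
    Finset.sum_sq_le_sq_sum_of_nonneg (s := Finset.univ) fun i _ => abs_nonneg (x i)

namespace Matrix

variable {𝕜 m n : Type*} [RCLike 𝕜] [Fintype m] [Fintype n] [DecidableEq n]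

theorem l2_opNorm_le_sqrt_sum_norm_sq (A : Matrix m n 𝕜) :
    ‖A‖ ≤ √(∑ i, ∑ j, ‖A i j‖ ^ 2) := by
  rw [l2_opNorm_def]
  refine ContinuousLinearMap.opNorm_le_bound _ (Real.sqrt_nonneg _) fun x => ?_
  have hrow : ∀ i, ‖(A *ᵥ x.ofLp) i‖ ^ 2 ≤ (∑ j, ‖A i j‖ ^ 2) * ‖x‖ ^ 2 := fun i => by
    rw [EuclideanSpace.norm_sq_eq]
    calc ‖(A *ᵥ x.ofLp) i‖ ^ 2 ≤ (∑ j, ‖A i j‖ * ‖x j‖) ^ 2 := by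
          gcongr
          exact (norm_sum_le _ _).trans_eq (by simp only [norm_mul])
      _ ≤ _ := Finset.sum_mul_sq_le_sq_mul_sq _ _ _
  refine le_of_sq_le_sq ?_ (by positivity)
  calc ‖_‖ ^ 2 = ∑ i, ‖(A *ᵥ x.ofLp) i‖ ^ 2 := EuclideanSpace.norm_sq_eq _
    _ ≤ ∑ i, (∑ j, ‖A i j‖ ^ 2) * ‖x‖ ^ 2 := Finset.sum_le_sum fun i _ => hrow i
    _ = _ := by
      rw [← Finset.sum_mul, mul_pow, Real.sq_sqrt (by positivity)]

theorem l2_opNorm_le_card_mul_of_norm_le {A : Matrix n n 𝕜} {c : ℝ} (hc : 0 ≤ c)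
    (hA : ∀ i j, ‖A i j‖ ≤ c) : ‖A‖ ≤ Fintype.card n * c := by
  refine (l2_opNorm_le_sqrt_sum_norm_sq A).trans ?_
  rw [Real.sqrt_le_left (by positivity)]
  calc ∑ i, ∑ j, ‖A i j‖ ^ 2 ≤ ∑ _i : n, ∑ _j : n, c ^ 2 := by gcongr with i _ j _; exact hA i j
    _ = _ := by simp only [Finset.sum_const, Finset.card_univ, nsmul_eq_mul]; ring

end Matrix

theorem mul_exp_neg_mul_le_of_inv_mul_log_div_le {a γ K η : ℝ} (hK : 0 < K) (hη : 0 < η)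
    (hγK : K⁻¹ * Real.log (a / η) ≤ γ) : a * Real.exp (-(γ * K)) ≤ η := by
  have hlog : Real.log (a / η) ≤ γ * K := by rwa [inv_mul_le_iff₀ hK, mul_comm] at hγK
  have : a / η ≤ Real.exp (γ * K) :=
    (Real.le_exp_log _).trans (Real.exp_le_exp.mpr hlog)
  rw [div_le_iff₀ hη] at this
  calc a * Real.exp (-(γ * K)) ≤ Real.exp (γ * K) * η * Real.exp (-(γ * K)) := by gcongr
    _ = η := by rw [mul_right_comm, ← Real.exp_add, add_neg_cancel, Real.exp_zero, one_mul]

theorem exp_neg_mul_sum_abs_sub_le {ι : Type*} [Fintype ι] {x y : EuclideanSpace ℝ ι}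
    {γ K : ℝ} (hγ : 0 ≤ γ) (hK : K ≤ ‖x - y‖) :
    Real.exp (-γ * ∑ i, |x i - y i|) ≤ Real.exp (-(γ * K)) := by
  have hl1 : K ≤ ∑ i, |x i - y i| := by
    simpa only [PiLp.sub_apply] using hK.trans (x - y).norm_le_sum_abs
  rw [Real.exp_le_exp, neg_mul]
  exact neg_le_neg (mul_le_mul_of_nonneg_left hl1 hγ)

theorem offdiagonal_laplace_kernel_norm_bound_general
    {d m : ℕ} (x : Fin m → EuclideanSpace ℝ (Fin d))
    (γ K η : ℝ) (hγ : 0 < γ) (hK : 0 < K) (hη : 0 < η)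
    (hsep : ∀ j k : Fin m, j ≠ k → K ≤ ‖x j - x k‖)
    (hγK : K⁻¹ * Real.log (m / η) ≤ γ)
    (B : Matrix (Fin m) (Fin m) ℂ)
    (hBdiag : ∀ j, B j j = 0)
    (hBoff : ∀ j k, j ≠ k →
      B j k = Real.exp (-γ * ∑ i, |x j i - x k i|)) :
    ‖B‖ ≤ η := by
  have hentry : ∀ j k, ‖B j k‖ ≤ Real.exp (-(γ * K)) := by
    intro j k
    rcases eq_or_ne j k with rfl | hjk
    · rw [hBdiag, norm_zero]
      positivity
    · rw [hBoff j k hjk, Complex.norm_real, Real.norm_of_nonneg (Real.exp_pos _).le]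
      exact exp_neg_mul_sum_abs_sub_le hγ.le (hsep j k hjk)
  calc ‖B‖ ≤ m * Real.exp (-(γ * K)) := by
        simpa only [Fintype.card_fin] using
          Matrix.l2_opNorm_le_card_mul_of_norm_le (Real.exp_pos _).le hentry
    _ ≤ η := mul_exp_neg_mul_le_of_inv_mul_log_div_le hK hη hγK

/-- for the self-adjoint matrix `B` with zero diagonal and off-diagonal entries
`B_{j,k} = exp(−γ‖x_j−x_k‖₁)` for `K`-separated points (in the Euclidean norm), if
`γ ≥ (1/K) log(m/η)` then `‖B‖₂ ≤ η`. -/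
theorem offdiagonal_laplace_kernel_norm_bound
    {d m : ℕ} (hm : 0 < m) (x : Fin m → EuclideanSpace ℝ (Fin d))
    (γ K η : ℝ) (hγ : 0 < γ) (hK : 0 < K) (hη : 0 < η)
    (hsep : ∀ j k : Fin m, j ≠ k → K ≤ ‖x j - x k‖)
    (hγK : K⁻¹ * Real.log (m / η) ≤ γ)
    (B : Matrix (Fin m) (Fin m) ℂ)
    (hBdiag : ∀ j, B j j = 0)
    (hBoff : ∀ j k, j ≠ k →
      B j k = Real.exp (-γ * ∑ i, |x j i - x k i|)) :
    ‖B‖ ≤ η :=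
  offdiagonal_laplace_kernel_norm_bound_general x γ K η hγ hK hη hsep hγK B hBdiag hBoff
end

section
/- (Decay rate of ‖c*‖₂²) Let c* ∈ ℂ^N have entries c*_k = α_{≤T}(ω_k)/N with ω_k i.i.d. from ρ. Then with probability at least 1−δ: ‖c*‖₂² ≤ (1/N)(‖f‖_ρ² + 4T² log(2/δ)/N + sqrt(2T²‖f‖_ρ² log(2/δ)/N)). -/
/-!
Each summand is `‖c*_k‖² = Z(ω_k) / N²` with `Z = |α_{≤T}|² ∈ [0, T²]` and `E Z ≤ ‖f‖_ρ²`.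
Convexity of `exp` on `[0, T²]` bounds the moment generating function of `Z` at `c` by
`exp ((e^{cT²} - 1) / T² · E Z)`. A Chernoff bound for the independent sum, with
`c = t / (v + T² t)` where `v = N T² ‖f‖_ρ²` and `t` is the deviation above `N ‖f‖_ρ²`, together
with `e^x - 1 - x ≤ x² / (2(1 - x))`, bounds the probability of the bad event by
`exp (-log (2/δ)) = δ/2`.
-/

open MeasureTheory ProbabilityTheory Real

lemma Real.exp_sub_one_sub_le {x : ℝ} (h0 : 0 ≤ x) (h1 : x < 1) :
    exp x - 1 - x ≤ x ^ 2 / (2 * (1 - x)) := by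
  have h := exp_bound' h0 h1.le (n := 3) (by norm_num)
  norm_num [Finset.sum_range_succ, Nat.factorial] at h
  rw [le_div_iff₀ (by linarith)]
  nlinarith [pow_nonneg h0 3, pow_nonneg h0 4]

lemma Real.exp_mul_le_one_add_of_mem_Icc {b z : ℝ} (c : ℝ) (hb : 0 < b) (hz : z ∈ Set.Icc 0 b) :
    exp (c * z) ≤ 1 + (exp (c * b) - 1) / b * z := by
  have h := convexOn_exp.2 (Set.mem_univ 0) (Set.mem_univ (c * b))
    (sub_nonneg.2 ((div_le_one hb).2 hz.2)) (div_nonneg hz.1 hb.le) (sub_add_cancel 1 (z / b))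
  have hz' : (1 - z / b) • (0 : ℝ) + (z / b) • (c * b) = c * z := by
    rw [smul_zero, zero_add, smul_eq_mul]; field_simp
  rw [hz'] at h
  simp only [smul_eq_mul, exp_zero, mul_one] at h
  calc exp (c * z) ≤ 1 - z / b + z / b * exp (c * b) := h
    _ = 1 + (exp (c * b) - 1) / b * z := by ring

lemma mgf_le_exp_mul_integral_of_mem_Icc {Ω : Type*} [MeasurableSpace Ω] {μ : Measure Ω}
    [IsProbabilityMeasure μ] {X : Ω → ℝ} {b : ℝ} (c : ℝ) (hb : 0 < b) (hX : AEMeasurable X μ)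
    (hXb : ∀ᵐ ω ∂μ, X ω ∈ Set.Icc 0 b) :
    mgf X μ c ≤ exp ((exp (c * b) - 1) / b * μ[X]) := by
  set k := (exp (c * b) - 1) / b
  have hXint : Integrable X μ := Integrable.of_mem_Icc 0 b hX hXb
  calc mgf X μ c ≤ ∫ ω, 1 + k * X ω ∂μ :=
        integral_mono_ae (integrable_exp_mul_of_mem_Icc hX hXb)
          ((integrable_const 1).add (hXint.const_mul k))
          (hXb.mono fun ω hω => exp_mul_le_one_add_of_mem_Icc c hb hω)
    _ = 1 + k * μ[X] := by
        rw [integral_add (integrable_const 1) (hXint.const_mul k), integral_const,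
          integral_const_mul, probReal_univ, one_smul]
    _ ≤ exp (k * μ[X]) := by linarith [add_one_le_exp (k * μ[X])]

lemma exists_bernstein_chernoff_parameter {b M L : ℝ} (hb : 0 < b) (hL : 0 ≤ L) :
    ∃ c, 0 ≤ c ∧ -c * (M + 4 * b * L + √(2 * b * M * L)) + (exp (c * b) - 1) / b * M ≤ -L := by
  set s := √(2 * b * M * L)
  have hs : 0 ≤ s := sqrt_nonneg _
  rcases le_or_gt M 0 with hM | hM
  · refine ⟨1 / b, by positivity, ?_⟩
    have hexp : (exp 1 - 2) * M - s ≤ 0 := by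
      nlinarith [add_one_le_exp 1]
    calc -(1 / b) * (M + 4 * b * L + s) + (exp (1 / b * b) - 1) / b * M
        = ((exp 1 - 2) * M - s) / b - 4 * L := by
          rw [one_div_mul_cancel hb.ne']; field_simp; ring
      _ ≤ -L := by linarith [div_nonpos_of_nonpos_of_nonneg hexp hb.le]
  · set v := b * M
    set t := 4 * b * L + s
    have hv : 0 < v := mul_pos hb hM
    have hs2 : s ^ 2 = 2 * v * L := by rw [sq_sqrt (by positivity)]; ring
    have hvbt : 0 < v + b * t := by positivity
    set c := t / (v + b * t)
    refine ⟨c, by positivity, ?_⟩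
    have hcb : 1 - c * b = v / (v + b * t) := by
      rw [div_mul_eq_mul_div, one_sub_div hvbt.ne']; ring
    have hct : c * t = t ^ 2 / (v + b * t) := by ring
    have hquad : M / b * (exp (c * b) - 1 - c * b) ≤ c * t / 2 := by
      calc M / b * (exp (c * b) - 1 - c * b) ≤ M / b * ((c * b) ^ 2 / (2 * (1 - c * b))) :=
            mul_le_mul_of_nonneg_left (exp_sub_one_sub_le (by positivity)
              (by linarith [hcb, div_pos hv hvbt])) (by positivity)
        _ = c * t / 2 := by
            rw [hcb]; simp only [c, v]; field_simp
    have hLct : L ≤ c * t / 2 := by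
      rw [hct, le_div_iff₀ two_pos, le_div_iff₀ hvbt]
      nlinarith [mul_nonneg (mul_nonneg hb.le hL) hs, sq_nonneg (b * L)]
    calc -c * (M + 4 * b * L + s) + (exp (c * b) - 1) / b * M
        = -(c * t) + M / b * (exp (c * b) - 1 - c * b) := by field_simp; ring
      _ ≤ -L := by linarith

theorem measureReal_mean_ge_le_exp_neg_of_iIndepFun {Ω ι : Type*} [MeasurableSpace Ω]
    {μ : Measure Ω} [IsProbabilityMeasure μ] [Fintype ι] [Nonempty ι] {X : ι → Ω → ℝ}
    (hindep : iIndepFun X μ) (hX : ∀ i, AEMeasurable (X i) μ) {b m L : ℝ} (hb : 0 < b)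
    (hL : 0 ≤ L) (hXb : ∀ i, ∀ᵐ ω ∂μ, X i ω ∈ Set.Icc 0 b) (hXm : ∀ i, μ[X i] ≤ m) :
    μ.real {ω | m + 4 * b * L / Fintype.card ι + √(2 * b * m * L / Fintype.card ι) ≤
      (∑ i, X i ω) / Fintype.card ι} ≤ exp (-L) := by
  set n : ℝ := (Fintype.card ι : ℝ)
  have hn : 0 < n := Nat.cast_pos.2 Fintype.card_pos
  set a := n * m + 4 * b * L + √(2 * b * (n * m) * L)
  have ha : n * (m + 4 * b * L / n + √(2 * b * m * L / n)) = a := by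
    have hsqrt : n * √(2 * b * m * L / n) = √(2 * b * (n * m) * L) := by
      rw [← sqrt_sq hn.le, ← sqrt_mul (sq_nonneg n), sqrt_sq hn.le]
      congr 1; field_simp
    rw [mul_add, mul_add, mul_div_cancel₀ _ hn.ne', hsqrt]
  obtain ⟨c, hc, hexponent⟩ := exists_bernstein_chernoff_parameter (M := n * m) hb hL
  set k := (exp (c * b) - 1) / b
  have hk : 0 ≤ k := div_nonneg (by linarith [add_one_le_exp (c * b), mul_nonneg hc hb.le]) hb.le
  have hS : AEMeasurable (∑ i, X i) μ := Finset.aemeasurable_sum _ fun i _ => hX i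
  have hSb : ∀ᵐ ω ∂μ, (∑ i, X i) ω ≤ n * b := by
    filter_upwards [ae_all_iff.2 hXb] with ω hω
    simpa [Finset.sum_apply, n] using Finset.sum_le_sum fun i (_ : i ∈ Finset.univ) => (hω i).2
  have hmgf : mgf (∑ i, X i) μ c ≤ exp (k * (n * m)) := by
    rw [hindep.mgf_sum₀ hX]
    calc ∏ i, mgf (X i) μ c ≤ ∏ _i : ι, exp (k * m) :=
          Finset.prod_le_prod (fun i _ => mgf_nonneg) fun i _ =>
            (mgf_le_exp_mul_integral_of_mem_Icc c hb (hX i) (hXb i)).trans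
              (exp_le_exp.2 (mul_le_mul_of_nonneg_left (hXm i) hk))
      _ = exp (k * (n * m)) := by
          rw [Finset.prod_const, ← exp_nat_mul, Finset.card_univ, mul_left_comm]
  calc μ.real {ω | m + 4 * b * L / n + √(2 * b * m * L / n) ≤ (∑ i, X i ω) / n}
      = μ.real {ω | a ≤ (∑ i, X i) ω} := by
        congr 1; ext ω
        rw [Set.mem_ofPred_eq, Set.mem_ofPred_eq, le_div_iff₀ hn, mul_comm, ha, Finset.sum_apply]
    _ ≤ exp (-c * a) * mgf (∑ i, X i) μ c :=
        measure_ge_le_exp_mul_mgf a hc (integrable_exp_mul_of_le c (n * b) hc hS hSb)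
    _ ≤ exp (-c * a) * exp (k * (n * m)) := by gcongr
    _ ≤ exp (-L) := by rw [← exp_add]; exact exp_le_exp.2 hexponent

lemma one_sub_measureReal_le_of_compl_subset {Ω : Type*} [MeasurableSpace Ω] {μ : Measure Ω}
    [IsProbabilityMeasure μ] {s t : Set Ω} (hst : sᶜ ⊆ t) : 1 - μ.real t ≤ μ.real s := by
  have h := measureReal_union_le (μ := μ) s sᶜ
  rw [Set.union_compl_self, probReal_univ] at h
  linarith [measureReal_mono (μ := μ) hst]

section Truncation

variable {E : Type*} [SeminormedAddGroup E] {T : ℝ}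

lemma sq_norm_ite_norm_le_eq (hT : 0 ≤ T) (x : E) :
    ‖if ‖x‖ ≤ T then x else 0‖ ^ 2 = if ‖x‖ ^ 2 ≤ T ^ 2 then ‖x‖ ^ 2 else 0 := by
  simp only [sq_le_sq₀ (norm_nonneg x) hT]; split_ifs <;> simp

lemma sq_norm_ite_norm_le_mem_Icc (x : E) :
    ‖if ‖x‖ ≤ T then x else 0‖ ^ 2 ∈ Set.Icc 0 (T ^ 2) := by
  split_ifs with h
  exacts [⟨by positivity, pow_le_pow_left₀ (norm_nonneg x) h 2⟩, ⟨by simp, by simp [sq_nonneg]⟩]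

lemma sq_norm_ite_norm_le_le (x : E) : ‖if ‖x‖ ≤ T then x else 0‖ ^ 2 ≤ ‖x‖ ^ 2 := by
  split_ifs <;> simp

lemma aemeasurable_sq_norm_ite_norm_le {Ω : Type*} [MeasurableSpace Ω] {μ : Measure Ω}
    {f : Ω → E} (hT : 0 ≤ T) (hf : AEMeasurable (fun ω => ‖f ω‖ ^ 2) μ) :
    AEMeasurable (fun ω => ‖if ‖f ω‖ ≤ T then f ω else 0‖ ^ 2) μ := by
  simp only [sq_norm_ite_norm_le_eq hT]
  exact (measurable_id.ite measurableSet_Iic measurable_const).comp_aemeasurable hf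

end Truncation

theorem coefficient_norm_decay_general
    {d : ℕ} (μ : Measure (Fin d → ℝ)) [IsProbabilityMeasure μ]
    (α : (Fin d → ℝ) → ℂ)
    (R : ℝ) (hR : R ^ 2 = ∫ ω, ‖α ω‖ ^ 2 ∂μ)
    (hα2 : Integrable (fun ω => ‖α ω‖ ^ 2) μ)
    (N : ℕ) (hN : 0 < N) (T δ : ℝ) (hT : 0 < T) (hδ : δ ∈ Set.Ioo (0:ℝ) 1) :
    (1 : ℝ) - δ ≤
      ((Measure.pi fun _ : Fin N => μ)
        {w | ∑ k : Fin N, ‖(if ‖α (w k)‖ ≤ T then α (w k) else 0) / (N : ℂ)‖ ^ 2 ≤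
            (N : ℝ)⁻¹ * (R ^ 2 + 4 * T ^ 2 * Real.log (2 / δ) / N +
              Real.sqrt (2 * T ^ 2 * R ^ 2 * Real.log (2 / δ) / N))}).toReal := by
  obtain ⟨hδ0, hδ1⟩ := hδ
  have : Nonempty (Fin N) := ⟨⟨0, hN⟩⟩
  set L := log (2 / δ)
  set Z : (Fin d → ℝ) → ℝ := fun ω => ‖(if ‖α ω‖ ≤ T then α ω else 0 : ℂ)‖ ^ 2
  have hZ : AEMeasurable Z μ := aemeasurable_sq_norm_ite_norm_le hT.le hα2.aemeasurable
  have hZb : ∀ ω, Z ω ∈ Set.Icc 0 (T ^ 2) := fun ω => sq_norm_ite_norm_le_mem_Icc (α ω)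
  have hZm : μ[Z] ≤ R ^ 2 := hR ▸ integral_mono_of_nonneg (ae_of_all _ fun ω => (hZb ω).1) hα2
    (ae_of_all _ fun ω => sq_norm_ite_norm_le_le (α ω))
  have htail := measureReal_mean_ge_le_exp_neg_of_iIndepFun (μ := Measure.pi fun _ : Fin N => μ)
    (X := fun k w => Z (w k)) (b := T ^ 2) (m := R ^ 2) (L := L) (iIndepFun_pi fun _ => hZ)
    (fun k => hZ.comp_quasiMeasurePreserving (Measure.quasiMeasurePreserving_eval _ k))
    (by positivity) (log_nonneg ((one_le_div hδ0).2 (by linarith)))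
    (fun k => ae_of_all _ fun w => hZb (w k))
    (fun k => (integral_comp_eval hZ.aestronglyMeasurable).trans_le hZm)
  have hδL : exp (-L) ≤ δ := by rw [exp_neg, exp_log (by positivity), inv_div]; linarith
  refine (sub_le_sub_left (htail.trans hδL) 1).trans
    (one_sub_measureReal_le_of_compl_subset fun w hw => ?_)
  simp only [Set.mem_compl_iff, Set.mem_ofPred_eq, not_le, norm_div, Complex.norm_natCast,
    div_pow, ← Finset.sum_div, Fintype.card_fin] at hw ⊢
  refine (lt_of_mul_lt_mul_left (hw.trans_eq ?_) (inv_nonneg.2 N.cast_nonneg)).le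
  ring

/-- Decay rate of `‖c*‖₂²`: for `c*_k = α_{≤T}(ω_k)/N` with `ω_k` i.i.d. from
`ρ` and `‖f‖_ρ² = E[|α|²] = R²`, with probability at least `1 − δ`:
`‖c*‖₂² ≤ (1/N)(R² + 4T²log(2/δ)/N + sqrt(2T²R²log(2/δ)/N))`. -/
theorem coefficient_norm_decay
    {d : ℕ} (μ : Measure (Fin d → ℝ)) [IsProbabilityMeasure μ]
    (α : (Fin d → ℝ) → ℂ)
    (R : ℝ) (hR0 : 0 ≤ R) (hR : R ^ 2 = ∫ ω, ‖α ω‖ ^ 2 ∂μ)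
    (hα2 : Integrable (fun ω => ‖α ω‖ ^ 2) μ)
    (N : ℕ) (hN : 0 < N) (T δ : ℝ) (hT : 0 < T) (hδ : δ ∈ Set.Ioo (0:ℝ) 1) :
    (1 : ℝ) - δ ≤
      ((Measure.pi fun _ : Fin N => μ)
        {w | ∑ k : Fin N, ‖(if ‖α (w k)‖ ≤ T then α (w k) else 0) / (N : ℂ)‖ ^ 2 ≤
            (N : ℝ)⁻¹ * (R ^ 2 + 4 * T ^ 2 * Real.log (2 / δ) / N +
              Real.sqrt (2 * T ^ 2 * R ^ 2 * Real.log (2 / δ) / N))}).toReal :=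
  coefficient_norm_decay_general μ α R hR hα2 N hN T δ hT hδ
end

section
/- Let D ⊂ ℝ^d be a compact domain, X = {x_1,…,x_m} ⊂ D with fill-in distance h_X = max_{x∈D} min_{x'∈X} ‖x−x'‖₂, and let g: D → ℂ be L_f-Lipschitz. Then ∫_D |g(x)|² dx ≤ 2L_f² h_X² vol(D) + C h_X^d Σ_{j=1}^m |g(x_j)|², where C>0 depends only on d (C=1 if d=1, C=π if d=2, C=4π²/3 if d=3). -/
/-!
Cut `D` into the Voronoi cells of the nodes `x j`, with ties broken by the order of the indices.
Each cell lies in the closed ball of radius `h_X` about its node, so on it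
`|g|² ≤ 2 L² h_X² + 2 |g(x_j)|²`, and its volume is at most `h_X^d` times the volume of the
unit ball. Summing over the cells gives the bound with `C = 2 vol(B(0,1))`.
-/

open MeasureTheory Metric Set Finset Module Function
open scoped ENNReal

section Voronoi

variable {α ι : Type*} [PseudoMetricSpace α]

def voronoiCell (x : ι → α) (j : ι) : Set α :=
  {p | ∀ k, dist p (x j) ≤ dist p (x k)}

noncomputable def fillDistance (D : Set α) (x : ι → α) : ℝ :=
  ⨆ p : D, ⨅ j, dist (p : α) (x j)

theorem fillDistance_nonneg (D : Set α) (x : ι → α) : 0 ≤ fillDistance D x :=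
  Real.iSup_nonneg fun _ => Real.iInf_nonneg fun _ => dist_nonneg

theorem isClosed_voronoiCell (x : ι → α) (j : ι) : IsClosed (voronoiCell x j) := by
  simp only [voronoiCell, ofPred_forall]
  exact isClosed_iInter fun k =>
    isClosed_le (continuous_id.dist continuous_const) (continuous_id.dist continuous_const)

theorem iUnion_voronoiCell [Finite ι] [Nonempty ι] (x : ι → α) : ⋃ j, voronoiCell x j = univ :=
  eq_univ_of_forall fun p => mem_iUnion.2 (Finite.exists_min fun j => dist p (x j))

theorem iInf_dist_le_fillDistance [Nonempty ι] {D : Set α} (hD : Bornology.IsBounded D)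
    (x : ι → α) {p : α} (hp : p ∈ D) : ⨅ j, dist p (x j) ≤ fillDistance D x := by
  obtain ⟨j₀⟩ := ‹Nonempty ι›
  obtain ⟨R, hR⟩ := hD.subset_closedBall (x j₀)
  have hbdd : BddAbove (range fun q : D => ⨅ j, dist (q : α) (x j)) := by
    refine ⟨R, forall_mem_range.2 fun q => ?_⟩
    exact (ciInf_le ⟨0, forall_mem_range.2 fun _ => dist_nonneg⟩ j₀).trans (hR q.2)
  exact le_ciSup hbdd (⟨p, hp⟩ : D)

theorem inter_voronoiCell_subset_closedBall [Nonempty ι] {D : Set α}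
    (hD : Bornology.IsBounded D) (x : ι → α) (j : ι) :
    D ∩ voronoiCell x j ⊆ closedBall (x j) (fillDistance D x) :=
  fun _ ⟨hpD, hpj⟩ => (le_ciInf hpj).trans (iInf_dist_le_fillDistance hD x hpD)

end Voronoi

theorem measurableSet_disjointed {α ι : Type*} [MeasurableSpace α] [Preorder ι]
    [LocallyFiniteOrderBot ι] [Countable ι] {f : ι → Set α} (hf : ∀ i, MeasurableSet (f i))
    (i : ι) : MeasurableSet (disjointed f i) := by
  rw [disjointed_eq_inter_compl]
  exact (hf i).inter (.iInter fun j => .iInter fun _ => (hf j).compl)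

theorem norm_sq_le_two_mul_norm_sub_sq_add {F : Type*} [SeminormedAddCommGroup F] (a b : F) :
    ‖a‖ ^ 2 ≤ 2 * (‖a - b‖ ^ 2 + ‖b‖ ^ 2) :=
  calc ‖a‖ ^ 2 ≤ (‖a - b‖ + ‖b‖) ^ 2 := by
        gcongr; linarith [norm_le_norm_add_norm_sub' a b]
    _ ≤ 2 * (‖a - b‖ ^ 2 + ‖b‖ ^ 2) := add_sq_le

theorem continuousOn_of_norm_sub_le_mul {α F : Type*} [PseudoMetricSpace α]
    [SeminormedAddCommGroup F] {g : α → F} {D : Set α} {L : ℝ}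
    (hg : ∀ p ∈ D, ∀ q ∈ D, ‖g p - g q‖ ≤ L * dist p q) : ContinuousOn g D :=
  (LipschitzOnWith.of_dist_le_mul (K := L.toNNReal) fun p hp q hq =>
    (dist_eq_norm _ _).trans_le <| (hg p hp q hq).trans <|
      mul_le_mul_of_nonneg_right (Real.le_coe_toNNReal L) dist_nonneg).continuousOn

theorem setIntegral_norm_sq_le_of_subset_closedBall {α F : Type*} [PseudoMetricSpace α]
    [MeasurableSpace α] [SeminormedAddCommGroup F] (μ : Measure α) {S : Set α} (hS : μ S ≠ ∞)
    {c : α} {r : ℝ} (hSr : S ⊆ closedBall c r) {g : α → F} {L : ℝ}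
    (hg : ∀ p ∈ S, ‖g p - g c‖ ≤ L * dist p c) :
    ∫ p in S, ‖g p‖ ^ 2 ∂μ ≤ (2 * L ^ 2 * r ^ 2 + 2 * ‖g c‖ ^ 2) * μ.real S := by
  have hbound : ∀ p ∈ S, ‖‖g p‖ ^ 2‖ ≤ 2 * L ^ 2 * r ^ 2 + 2 * ‖g c‖ ^ 2 := by
    intro p hp
    have hLr : ‖g p - g c‖ ^ 2 ≤ L ^ 2 * r ^ 2 := calc
      ‖g p - g c‖ ^ 2 ≤ (L * dist p c) ^ 2 := pow_le_pow_left₀ (norm_nonneg _) (hg p hp) 2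
      _ = L ^ 2 * dist p c ^ 2 := mul_pow L _ 2
      _ ≤ L ^ 2 * r ^ 2 := by gcongr; exact hSr hp
    rw [norm_pow, norm_norm]
    linarith [norm_sq_le_two_mul_norm_sub_sq_add (g p) (g c)]
  exact (le_abs_self _).trans (norm_setIntegral_le_of_norm_le_const hS.lt_top hbound)

section AddHaar

variable {E : Type*} [NormedAddCommGroup E] [NormedSpace ℝ E] [FiniteDimensional ℝ E]
  [MeasurableSpace E] [BorelSpace E] (μ : Measure E) [μ.IsAddHaarMeasure]

theorem measureReal_le_of_subset_closedBall {S : Set E} {c : E} {r : ℝ} (hr : 0 ≤ r)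
    (hS : S ⊆ closedBall c r) : μ.real S ≤ r ^ finrank ℝ E * μ.real (ball 0 1) :=
  (measureReal_mono hS measure_closedBall_lt_top.ne).trans_eq (μ.addHaar_real_closedBall c hr)

theorem integral_norm_sq_le_of_partition {F ι : Type*} [SeminormedAddCommGroup F] [Fintype ι]
    {D : Set E} {W : ι → Set E} (hWm : ∀ j, MeasurableSet (W j))
    (hWd : Pairwise (Disjoint on W)) (hWD : ⋃ j, W j = D) {x : ι → E} (hx : ∀ j, x j ∈ D)
    {r : ℝ} (hr : 0 ≤ r) (hWr : ∀ j, W j ⊆ closedBall (x j) r) {g : E → F} {L : ℝ}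
    (hg : ∀ p ∈ D, ∀ q ∈ D, ‖g p - g q‖ ≤ L * dist p q)
    (hint : IntegrableOn (fun p => ‖g p‖ ^ 2) D μ) :
    ∫ p in D, ‖g p‖ ^ 2 ∂μ ≤
      2 * L ^ 2 * r ^ 2 * μ.real D +
        2 * μ.real (ball 0 1) * r ^ finrank ℝ E * ∑ j, ‖g (x j)‖ ^ 2 := by
  have hWD' : ∀ j, W j ⊆ D := fun j => hWD ▸ subset_iUnion W j
  have hWfin : ∀ j, μ (W j) ≠ ∞ := fun j =>
    measure_ne_top_of_subset (hWr j) measure_closedBall_lt_top.ne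
  calc ∫ p in D, ‖g p‖ ^ 2 ∂μ = ∑ j, ∫ p in W j, ‖g p‖ ^ 2 ∂μ := by
        rw [← hWD]; exact integral_iUnion_fintype hWm hWd fun j => hint.mono_set (hWD' j)
    _ ≤ ∑ j, (2 * L ^ 2 * r ^ 2 + 2 * ‖g (x j)‖ ^ 2) * μ.real (W j) :=
        sum_le_sum fun j _ => setIntegral_norm_sq_le_of_subset_closedBall μ (hWfin j) (hWr j)
          fun p hp => hg p (hWD' j hp) (x j) (hx j)
    _ = 2 * L ^ 2 * r ^ 2 * ∑ j, μ.real (W j) + ∑ j, 2 * ‖g (x j)‖ ^ 2 * μ.real (W j) := by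
        rw [mul_sum, ← sum_add_distrib]
        exact sum_congr rfl fun j _ => by ring
    _ ≤ 2 * L ^ 2 * r ^ 2 * μ.real D +
          ∑ j, 2 * ‖g (x j)‖ ^ 2 * (r ^ finrank ℝ E * μ.real (ball 0 1)) := by
        rw [← hWD, measureReal_iUnion_fintype hWd hWm hWfin]
        gcongr with j
        exact measureReal_le_of_subset_closedBall μ hr (hWr j)
    _ = 2 * L ^ 2 * r ^ 2 * μ.real D +
          2 * μ.real (ball 0 1) * r ^ finrank ℝ E * ∑ j, ‖g (x j)‖ ^ 2 := by
        rw [mul_sum]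
        exact congrArg _ (sum_congr rfl fun j _ => by ring)

end AddHaar

/-- for a compact `D ⊂ ℝ^d`, points `x_1,…,x_m ∈ D` with fill-in distance
`h_X = max_{x∈D} min_j ‖x−x_j‖`, and an `L_f`-Lipschitz `g : D → ℂ`, one has
`∫_D |g|² ≤ 2 L_f² h_X² vol(D) + C h_X^d Σ_j |g(x_j)|²` with `C > 0` depending only on `d`. -/
theorem fill_distance_voronoi_bound (d : ℕ) :
    ∃ C : ℝ, 0 < C ∧
      ∀ (m : ℕ), 0 < m →
        ∀ (D : Set (EuclideanSpace ℝ (Fin d))), IsCompact D →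
          ∀ (x : Fin m → EuclideanSpace ℝ (Fin d)), (∀ j, x j ∈ D) →
            ∀ (g : EuclideanSpace ℝ (Fin d) → ℂ) (Lf hX : ℝ), 0 ≤ Lf →
              (∀ p ∈ D, ∀ q ∈ D, ‖g p - g q‖ ≤ Lf * dist p q) →
              hX = ⨆ p : D, ⨅ j : Fin m, dist (p : EuclideanSpace ℝ (Fin d)) (x j) →
              (∫ p in D, ‖g p‖ ^ 2) ≤
                2 * Lf ^ 2 * hX ^ 2 * (volume D).toReal +
                  C * hX ^ d * ∑ j, ‖g (x j)‖ ^ 2 := by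
  refine ⟨2 * volume.real (ball (0 : EuclideanSpace ℝ (Fin d)) 1),
    mul_pos two_pos (ENNReal.toReal_pos (measure_ball_pos _ _ one_pos).ne'
      measure_ball_lt_top.ne), ?_⟩
  intro m hm D hD x hx g Lf hX _ hLip rfl
  have : Nonempty (Fin m) := ⟨⟨0, hm⟩⟩
  have hbound := integral_norm_sq_le_of_partition volume
    (W := fun j => D ∩ disjointed (voronoiCell x) j)
    (fun j => hD.measurableSet.inter
      (measurableSet_disjointed (fun k => (isClosed_voronoiCell x k).measurableSet) j))
    (fun i j hij => (disjoint_disjointed _ hij).mono inter_subset_right inter_subset_right)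
    (by rw [← inter_iUnion, iUnion_disjointed, iUnion_voronoiCell, inter_univ]) hx
    (fillDistance_nonneg D x)
    (fun j p hp => inter_voronoiCell_subset_closedBall hD.isBounded x j
      ⟨hp.1, disjointed_subset _ j hp.2⟩)
    hLip (((continuousOn_of_norm_sub_le_mul hLip).norm.pow 2).integrableOn_compact hD)
  rwa [finrank_euclideanSpace_fin] at hbound
end
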